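/- arXiv:2605.12908 — 4 statements merged into one kernel-verified Lean document; each statement's English description precedes it below -/
import Mathlib

section
/- There exists a constant C > 0 depending only on q such that the following holds: for every polynomial r of degree at most q with ∫ r dγ = 0 and ∫ r² dγ = 1, and every real number d ≥ 2, we have γ({z ∈ ℝ : |r(z)| ≥ C (log d)^{q/2}}) ≤ 1/d. -/
/-!
On the finite-dimensional space of polynomials of degree at most `q` the `L²(γ)` norm is
equivalent to the sup norm of the coefficients, so a polynomial with unit second moment has
coefficients bounded by a constant `B` depending only on `q`, and therefore
`|r z| ≤ (q + 1) B max(1, |z|)^q`. With `t = 2 √(log d)`, the event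
`|r z| ≥ 2 (q + 1) B 2^q (log d)^(q/2) = 2 (q + 1) B t^q` forces `|z| ≥ t`, which by the
Chernoff bound has Gaussian probability at most `2 exp(-t²/2) = 2/d² ≤ 1/d`.
-/

open MeasureTheory ProbabilityTheory Real Set Filter Polynomial
open scoped NNReal ENNReal

namespace MeasureTheory.Lp

variable {α : Type*} [MeasurableSpace α] {μ : Measure α}

lemma coeFn_finset_sum {E : Type*} [NormedAddCommGroup E] {p : ℝ≥0∞} {ι : Type*}
    (s : Finset ι) (f : ι → Lp E p μ) : ⇑(∑ i ∈ s, f i) =ᵐ[μ] ∑ i ∈ s, ⇑(f i) := by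
  classical
  induction s using Finset.induction_on with
  | empty => simpa using coeFn_zero E p μ
  | insert i s hi ih =>
    simp only [Finset.sum_insert hi]
    filter_upwards [coeFn_add (f i) (∑ j ∈ s, f j), ih] with x hx hs
    rw [Finset.sum_apply] at hs
    rw [hx, Pi.add_apply, Pi.add_apply, hs, Finset.sum_apply]

lemma norm_sq_eq_integral_sq (f : Lp ℝ 2 μ) : ‖f‖ ^ 2 = ∫ x, f x ^ 2 ∂μ := by
  rw [← real_inner_self_eq_norm_sq, L2.inner_def]
  simp [sq]

end MeasureTheory.Lp

lemma Polynomial.eq_zero_of_ae_eval_eq_zero {μ : Measure ℝ} [NullSingletonClass μ] [NeZero μ]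
    {p : ℝ[X]} (h : ∀ᵐ x ∂μ, p.eval x = 0) : p = 0 := by
  by_contra hp
  have hroots : μ {x | p.eval x = 0} = 0 := (p.finite_setOfPred_isRoot hp).measure_zero μ
  have : μ univ = 0 := by
    rw [← union_compl_self {x | p.eval x = 0}]
    exact measure_union_null hroots (ae_iff.mp h)
  exact NeZero.ne μ (Measure.measure_univ_eq_zero.mp this)

section CoeffBound

variable {μ : Measure ℝ} (hμ : ∀ k : ℕ, MemLp (fun x : ℝ => x ^ k) 2 μ)

noncomputable def coeffsToL2 (n : ℕ) : (Fin n → ℝ) →ₗ[ℝ] Lp ℝ 2 μ :=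
  Fintype.linearCombination ℝ fun i => (hμ i).toLp _

lemma coeFn_coeffsToL2 {n : ℕ} (a : Fin n → ℝ) :
    ⇑(coeffsToL2 hμ n a) =ᵐ[μ] fun x => ∑ i, a i * x ^ (i : ℕ) := by
  rw [coeffsToL2, Fintype.linearCombination_apply]
  have hterm : ∀ i, ⇑(a i • (hμ i).toLp (fun x : ℝ => x ^ (i : ℕ))) =ᵐ[μ]
      fun x => a i * x ^ (i : ℕ) := fun i =>
    (Lp.coeFn_smul (a i) ((hμ i).toLp _)).trans ((hμ i).coeFn_toLp.mono fun x hx => by simp [hx])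
  filter_upwards [Lp.coeFn_finset_sum Finset.univ fun i => a i • (hμ i).toLp _,
    ae_all_iff.mpr hterm] with x hsum hx
  rw [hsum, Finset.sum_apply]
  exact Finset.sum_congr rfl fun i _ => hx i

lemma coeffsToL2_injective [NullSingletonClass μ] [NeZero μ] (n : ℕ) :
    Function.Injective (coeffsToL2 hμ n) := by
  rw [← LinearMap.ker_eq_bot, LinearMap.ker_eq_bot']
  intro a ha
  let p : ℝ[X] := ∑ i : Fin n, monomial (i : ℕ) (a i)
  have hp : p = 0 := by
    refine eq_zero_of_ae_eval_eq_zero (μ := μ) ?_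
    filter_upwards [coeFn_coeffsToL2 hμ a, ha ▸ Lp.coeFn_zero ℝ 2 μ] with x hx h0
    simpa [p, eval_finsetSum, hx] using h0
  ext i
  simpa [p, finsetSum_coeff, coeff_monomial, Fin.val_inj] using congr_arg (coeff · i) hp

end CoeffBound

lemma Polynomial.exists_abs_coeff_le_mul_sqrt_integral_sq {μ : Measure ℝ} [NullSingletonClass μ]
    [NeZero μ] (hμ : ∀ k : ℕ, MemLp (fun x : ℝ => x ^ k) 2 μ) (n : ℕ) :
    ∃ B, 0 < B ∧ ∀ p : ℝ[X], p.natDegree < n → ∀ i,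
      |p.coeff i| ≤ B * √(∫ x, p.eval x ^ 2 ∂μ) := by
  obtain ⟨K, hK, hanti⟩ := (coeffsToL2 hμ n).injective_iff_antilipschitz.mp
    (coeffsToL2_injective hμ n)
  refine ⟨K, hK, fun p hp i => ?_⟩
  by_cases hi : i < n
  swap
  · rw [coeff_eq_zero_of_natDegree_lt (by omega), abs_zero]
    positivity
  let a : Fin n → ℝ := fun j => p.coeff j
  have hnorm : ‖coeffsToL2 hμ n a‖ = √(∫ x, p.eval x ^ 2 ∂μ) := by
    rw [← Real.sqrt_sq (norm_nonneg _), Lp.norm_sq_eq_integral_sq]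
    congr 1
    refine integral_congr_ae ((coeFn_coeffsToL2 hμ a).mono fun x hx => ?_)
    simp only [hx]
    rw [eval_eq_sum_range' hp, ← Fin.sum_univ_eq_sum_range (fun j => p.coeff j * x ^ j)]
  calc |p.coeff i| = ‖a ⟨i, hi⟩‖ := rfl
    _ ≤ ‖a‖ := norm_le_pi_norm a _
    _ ≤ K * ‖coeffsToL2 hμ n a‖ := ZeroHomClass.bound_of_antilipschitz _ hanti a
    _ = K * √(∫ x, p.eval x ^ 2 ∂μ) := by rw [hnorm]

lemma Polynomial.abs_eval_le_of_abs_coeff_le {p : ℝ[X]} {n : ℕ} (hp : p.natDegree ≤ n) {B : ℝ}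
    (hB : ∀ i, |p.coeff i| ≤ B) (x : ℝ) : |p.eval x| ≤ (n + 1) * B * max 1 |x| ^ n := by
  rw [eval_eq_sum_range' (Nat.lt_succ_of_le hp)]
  calc |∑ i ∈ Finset.range (n + 1), p.coeff i * x ^ i|
      ≤ ∑ i ∈ Finset.range (n + 1), |p.coeff i| * |x| ^ i := by
        simpa only [abs_mul, abs_pow] using
          Finset.abs_sum_le_sum_abs (fun i => p.coeff i * x ^ i) (Finset.range (n + 1))
    _ ≤ ∑ _i ∈ Finset.range (n + 1), B * max 1 |x| ^ n := by
        refine Finset.sum_le_sum fun i hi => mul_le_mul (hB i) ?_ (by positivity)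
          ((abs_nonneg _).trans (hB i))
        calc |x| ^ i ≤ max 1 |x| ^ i := by gcongr; exact le_max_right _ _
          _ ≤ max 1 |x| ^ n :=
            pow_le_pow_right₀ (le_max_left _ _) (Nat.lt_succ_iff.mp (Finset.mem_range.mp hi))
    _ = (n + 1) * B * max 1 |x| ^ n := by
        rw [Finset.sum_const, Finset.card_range, nsmul_eq_mul]
        push_cast
        ring

/-- The factor `2` makes the comparison of `t ^ n` with `max 1 |x| ^ n` strict, which also
settles the case `n = 0`. -/
lemma Polynomial.le_abs_of_le_abs_eval {p : ℝ[X]} {n : ℕ} (hp : p.natDegree ≤ n) {B : ℝ}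
    (hB₀ : 0 < B) (hB : ∀ i, |p.coeff i| ≤ B) {t x : ℝ} (ht : 1 ≤ t)
    (hx : 2 * ((n + 1) * B) * t ^ n ≤ |p.eval x|) : t ≤ |x| := by
  have hbound := abs_eval_le_of_abs_coeff_le hp hB x
  have hA : 0 < (n + 1) * B := by positivity
  have htn : 0 < t ^ n := by positivity
  have hlt : t < max 1 |x| := lt_of_pow_lt_pow_left₀ n (by positivity) (by nlinarith)
  exact ((lt_max_iff.mp hlt).resolve_left (by linarith)).le

lemma memLp_pow_gaussianReal (μ : ℝ) (v : ℝ≥0) (k : ℕ) :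
    MemLp (fun x : ℝ => x ^ k) 2 (gaussianReal μ v) := by
  refine (memLp_two_iff_integrable_sq (by fun_prop)).mpr ?_
  refine ((memLp_id_gaussianReal (k * 2 : ℕ)).integrable_norm_pow').congr
    (ae_of_all _ fun x => ?_)
  simp only [id, Real.norm_eq_abs]
  rw [pow_mul, ← abs_pow, sq_abs]

lemma gaussianReal_measureReal_abs_ge_le {v : ℝ≥0} (hv : v ≠ 0) {ε : ℝ} (hε : 0 ≤ ε) :
    (gaussianReal 0 v).real {x | ε ≤ |x|} ≤ 2 * exp (-ε ^ 2 / (2 * v)) := by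
  have hmgf := mgf_fun_id_gaussianReal (μ := 0) (v := v)
  have hint := integrable_exp_mul_gaussianReal (μ := 0) (v := v)
  have hv' : (0 : ℝ) < v := by positivity
  have hupper : (gaussianReal 0 v).real {x | ε ≤ x} ≤ exp (-ε ^ 2 / (2 * v)) := by
    have := measure_ge_le_exp_mul_mgf (X := fun x => x) ε (by positivity) (hint (ε / v))
    rw [hmgf, ← exp_add] at this
    convert this using 3
    field_simp
    ring
  have hlower : (gaussianReal 0 v).real {x | x ≤ -ε} ≤ exp (-ε ^ 2 / (2 * v)) := by
    have := measure_le_le_exp_mul_mgf (X := fun x => x) (-ε) (neg_nonpos.mpr (by positivity))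
      (hint (-(ε / v)))
    rw [hmgf, ← exp_add] at this
    convert this using 3
    field_simp
    ring
  have hsplit : {x : ℝ | ε ≤ |x|} = {x | ε ≤ x} ∪ {x | x ≤ -ε} := by
    ext x
    simp [le_abs', or_comm]
  rw [hsplit]
  linarith [measureReal_union_le (μ := gaussianReal 0 v) {x : ℝ | ε ≤ x} {x | x ≤ -ε}]

lemma gaussianReal_abs_ge_two_mul_sqrt_log_le {d : ℝ} (hd : 2 ≤ d) :
    gaussianReal 0 1 {x | 2 * √(log d) ≤ |x|} ≤ ENNReal.ofReal (1 / d) := by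
  have hlog : 0 ≤ log d := log_nonneg (by linarith)
  rw [← ofReal_measureReal]
  refine ENNReal.ofReal_le_ofReal
    ((gaussianReal_measureReal_abs_ge_le one_ne_zero (by positivity)).trans ?_)
  have hexp : exp (-(2 * √(log d)) ^ 2 / (2 * ((1 : ℝ≥0) : ℝ))) = (d ^ 2)⁻¹ := by
    rw [mul_pow, sq_sqrt hlog, NNReal.coe_one, show -(2 ^ 2 * log d) / (2 * 1) = -(2 * log d) by
      ring, exp_neg, two_mul, exp_add, exp_log (by linarith), sq]
  rw [hexp, one_div]
  have hd₀ : 0 < d := by linarith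
  field_simp
  linarith

/-- There exists a constant `C > 0` (depending only on `q`) such that for
every polynomial `r` of degree at most `q` with Gaussian mean `0` and Gaussian second moment
`1`, and every real `d ≥ 2`, the standard Gaussian measure of the set where
`|r(z)| ≥ C (log d)^(q/2)` is at most `1/d`. -/
theorem gaussian_poly_tail_bound (q : ℕ) :
    ∃ C : ℝ, 0 < C ∧
      ∀ r : Polynomial ℝ, r.natDegree ≤ q →
        (∫ z, r.eval z ∂(gaussianReal 0 1)) = 0 →
        (∫ z, (r.eval z) ^ 2 ∂(gaussianReal 0 1)) = 1 →
        ∀ d : ℝ, 2 ≤ d →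
          gaussianReal 0 1 {z : ℝ | C * Real.log d ^ ((q : ℝ) / 2) ≤ |r.eval z|}
            ≤ ENNReal.ofReal (1 / d) := by
  have := nullSingletonClass_gaussianReal (μ := 0) one_ne_zero
  obtain ⟨B, hB, hcoeff⟩ :=
    exists_abs_coeff_le_mul_sqrt_integral_sq (memLp_pow_gaussianReal 0 1) (q + 1)
  refine ⟨2 * ((q + 1) * B) * 2 ^ q, by positivity, fun r hdeg _ hvar d hd => ?_⟩
  have hlog : 1 / 4 ≤ log d := by
    linarith [log_le_log (by norm_num) hd, log_two_gt_d9]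
  have ht : 1 ≤ 2 * √(log d) := by
    linarith [(le_sqrt (by norm_num : (0 : ℝ) ≤ 1 / 2) (by linarith)).mpr (by linarith)]
  have hthreshold : 2 * ((q + 1) * B) * 2 ^ q * log d ^ ((q : ℝ) / 2) =
      2 * ((q + 1) * B) * (2 * √(log d)) ^ q := by
    rw [rpow_div_two_eq_sqrt _ (by linarith), rpow_natCast, mul_pow, mul_assoc]
  refine (measure_mono fun z hz => ?_).trans (gaussianReal_abs_ge_two_mul_sqrt_log_le hd)
  rw [mem_ofPred_eq, hthreshold] at hz
  exact le_abs_of_le_abs_eval hdeg hB (fun i => by simpa [hvar] using hcoeff r (by omega) i) ht hz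
end

section
/- Let q, M be natural numbers, let (α_i)_{i=1}^{M} and (β_i)_{i=0}^{q} be real coefficients, and define h(z) = Σ_{i=1}^{M} (α_i/√(i!)) He_i(z) and ψ(z) = Σ_{i=0}^{q} (β_i/√(i!)) He_i(z). Let θ, w ∈ ℝ^d be unit vectors with ρ = θᵀw, and let x ∼ N(0, I_d). Then, with the convention β_j = 0 for j > q and α_i = 0 for i > M, E[h(θᵀx) · ψ'(wᵀx) · x] = Σ_{i≥1} [ i α_i β_i ρ^{i−1} θ + √((i+1)(i+2)) α_i β_{i+2} ρ^i w ]. -/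
open MeasureTheory ProbabilityTheory
open scoped RealInnerProductSpace BigOperators

/-- The standard Gaussian measure `N(0, I_d)` on `ℝ^d` (as `EuclideanSpace ℝ (Fin d)`),
realized as the pushforward of the product of `d` standard Gaussians on `ℝ`. -/
noncomputable def stdGaussian (d : ℕ) : Measure (EuclideanSpace ℝ (Fin d)) :=
  Measure.map (⇑(EuclideanSpace.equiv (Fin d) ℝ).symm)
    (Measure.pi fun _ : Fin d => gaussianReal 0 1)

/-- The `i`-th probabilists' Hermite polynomial, as a real polynomial. -/
noncomputable def Hp (i : ℕ) : Polynomial ℝ :=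
  (Polynomial.hermite i).map (Int.castRingHom ℝ)

/-!
Gaussian integration by parts (Stein's lemma) gives `E[F(x) x] = E[∇F(x)]`, and for
`F(x) = p(⟪a, x⟫) q(⟪b, x⟫)` the gradient is `p'q • a + pq' • b`. Hence the population gradient is
`E[h'(θᵀx) ψ'(wᵀx)] θ + E[h(θᵀx) ψ''(wᵀx)] w`. For unit vectors `a`, `b` with `ρ = ⟪a, b⟫`,
Stein's lemma in direction `a` and `He_{m+1}(s) = s He_m(s) - He_m'(s)` give
`E[He_{m+1}(⟪a, x⟫) Q(⟪b, x⟫)] = ρ E[He_m(⟪a, x⟫) Q'(⟪b, x⟫)]`, whence the orthogonality relation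
`E[He_m(⟪a, x⟫) He_n(⟪b, x⟫)] = δ_{mn} m! ρ^m`. Since `He_n' = n He_{n-1}`, the resulting double
sums collapse to their diagonals.
-/

open Polynomial
open scoped Nat

theorem Polynomial.derivative_hermite_succ (n : ℕ) :
    derivative (hermite (n + 1)) = (n + 1 : ℤ[X]) * hermite n := by
  induction n with
  | zero => simp
  | succ n ih =>
    rw [hermite_succ (n + 1), derivative_sub, derivative_mul, derivative_X, ih, hermite_succ n]
    simp only [derivative_mul, derivative_natCast, derivative_add, derivative_one]
    push_cast
    ring

lemma Hp_zero : Hp 0 = 1 := by simp [Hp]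

lemma Hp_succ (n : ℕ) : Hp (n + 1) = X * Hp n - derivative (Hp n) := by
  simp [Hp, hermite_succ, Polynomial.derivative_map]

lemma derivative_Hp_zero : derivative (Hp 0) = 0 := by simp [Hp_zero]

lemma derivative_Hp_succ (n : ℕ) : derivative (Hp (n + 1)) = C ((n : ℝ) + 1) * Hp n := by
  rw [Hp, Hp, derivative_map, derivative_hermite_succ, Polynomial.map_mul]
  simp

lemma hasDerivAt_gaussianPDFReal (μ : ℝ) (v : NNReal) (x : ℝ) :
    HasDerivAt (gaussianPDFReal μ v) (-((x - μ) / v) * gaussianPDFReal μ v x) x := by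
  have h : HasDerivAt (fun y => -(y - μ) ^ 2 / (2 * v)) (-(2 * (x - μ)) / (2 * v)) x := by
    simpa using (((hasDerivAt_id x).sub_const μ).pow 2).neg.div_const (2 * (v : ℝ))
  rw [gaussianPDFReal_def]
  refine (h.exp.const_mul (√(2 * Real.pi * v))⁻¹).congr_deriv ?_
  rcases eq_or_ne (v : ℝ) 0 with hv | hv
  · simp [hv]
  · field_simp

lemma integrable_gaussianReal_iff {E : Type*} [NormedAddCommGroup E] [NormedSpace ℝ E]
    {μ : ℝ} {v : NNReal} (hv : v ≠ 0) {g : ℝ → E} :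
    Integrable g (gaussianReal μ v) ↔ Integrable (fun x => gaussianPDFReal μ v x • g x) := by
  rw [gaussianReal_of_var_ne_zero _ hv, integrable_withDensity_iff_integrable_smul'
    (measurable_gaussianPDF μ v) (ae_of_all _ fun _ => gaussianPDF_lt_top)]
  simp [gaussianPDF, ENNReal.toReal_ofReal (gaussianPDFReal_nonneg μ v _)]

theorem integral_mul_id_eq_integral_deriv_gaussianReal {f f' : ℝ → ℝ}
    (hf : ∀ t, HasDerivAt f (f' t) t) (hfi : Integrable f (gaussianReal 0 1))
    (hfx : Integrable (fun t => f t * t) (gaussianReal 0 1))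
    (hf'i : Integrable f' (gaussianReal 0 1)) :
    ∫ t, f t * t ∂gaussianReal 0 1 = ∫ t, f' t ∂gaussianReal 0 1 := by
  have hφ (t : ℝ) : HasDerivAt (gaussianPDFReal 0 1) (-(t * gaussianPDFReal 0 1 t)) t := by
    simpa using hasDerivAt_gaussianPDFReal 0 1 t
  rw [integrable_gaussianReal_iff one_ne_zero] at hfi hfx hf'i
  have ibp : ∫ t, f t * -(t * gaussianPDFReal 0 1 t) = -∫ t, f' t * gaussianPDFReal 0 1 t :=
    integral_mul_deriv_eq_deriv_mul_of_integrable (fun t _ => hf t) (fun t _ => hφ t)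
      (by convert hfx.neg using 1; ext t; simp only [Pi.mul_apply, Pi.neg_apply, smul_eq_mul]; ring)
      (by convert hf'i using 1; ext t; simp only [Pi.mul_apply, smul_eq_mul, mul_comm])
      (by convert hfi using 1; ext t; simp only [Pi.mul_apply, smul_eq_mul, mul_comm])
  rw [integral_gaussianReal_eq_integral_smul one_ne_zero,
    integral_gaussianReal_eq_integral_smul one_ne_zero]
  calc ∫ t, gaussianPDFReal 0 1 t • (f t * t)
      = -∫ t, f t * -(t * gaussianPDFReal 0 1 t) := by
        rw [← integral_neg]
        congr with t
        simp only [smul_eq_mul, mul_neg, neg_neg]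
        ring
    _ = ∫ t, gaussianPDFReal 0 1 t • f' t := by simp only [ibp, neg_neg, smul_eq_mul, mul_comm]

section TemperateGrowth

variable {E : Type*} [NormedAddCommGroup E] [NormedSpace ℝ E]

lemma Function.HasTemperateGrowth.integrable [MeasurableSpace E] [BorelSpace E]
    [SecondCountableTopology E] {F : Type*} [NormedAddCommGroup F] [NormedSpace ℝ F] {f : E → F}
    (hf : f.HasTemperateGrowth) {μ : Measure E} [IsFiniteMeasure μ]
    (hμ : ∀ n : ℕ, MemLp _root_.id n μ) : Integrable f μ := by
  obtain ⟨k, C, hC⟩ := hf.2 0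
  have hbound : Integrable (fun x => C * (1 + ‖x‖) ^ k) μ := by
    have := ((memLp_const (1 : ℝ)).add (hμ k).norm).integrable_norm_pow'
    refine (this.congr (ae_of_all _ fun x => ?_)).const_mul C
    simp [abs_of_nonneg (by positivity : (0 : ℝ) ≤ 1 + ‖x‖)]
  refine hbound.mono' hf.1.continuous.aestronglyMeasurable (ae_of_all _ fun x => ?_)
  simpa using hC x

@[fun_prop]
lemma Function.HasTemperateGrowth.polynomial_eval (p : ℝ[X]) {f : E → ℝ}
    (hf : f.HasTemperateGrowth) : (fun x => p.eval (f x)).HasTemperateGrowth := by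
  simp_rw [eval_eq_sum_range]
  fun_prop

@[fun_prop]
lemma EuclideanSpace.hasTemperateGrowth_apply {ι : Type*} [Fintype ι] (j : ι) :
    Function.HasTemperateGrowth fun x : EuclideanSpace ℝ ι => x j :=
  (EuclideanSpace.proj j).hasTemperateGrowth

end TemperateGrowth

section StdGaussian

variable {d : ℕ}

lemma stdGaussian_eq_stdGaussian_euclideanSpace (d : ℕ) :
    stdGaussian d = ProbabilityTheory.stdGaussian (EuclideanSpace ℝ (Fin d)) :=
  map_pi_eq_stdGaussian

instance (d : ℕ) : IsGaussian (stdGaussian d) := by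
  rw [stdGaussian_eq_stdGaussian_euclideanSpace]
  infer_instance

lemma integrable_stdGaussian {F : Type*} [NormedAddCommGroup F] [NormedSpace ℝ F]
    {f : EuclideanSpace ℝ (Fin d) → F} (hf : f.HasTemperateGrowth) :
    Integrable f (stdGaussian d) :=
  hf.integrable fun n => IsGaussian.memLp_id _ n (by simp)

theorem integral_mul_apply_eq_integral_fderiv_stdGaussian (j : Fin d)
    {F : EuclideanSpace ℝ (Fin d) → ℝ}
    {F' : EuclideanSpace ℝ (Fin d) → StrongDual ℝ (EuclideanSpace ℝ (Fin d))}
    (hF : ∀ x, HasFDerivAt F (F' x) x) (hFi : Integrable F (stdGaussian d))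
    (hFx : Integrable (fun x => F x * x j) (stdGaussian d))
    (hF'i : Integrable (fun x => F' x (EuclideanSpace.single j 1)) (stdGaussian d)) :
    ∫ x, F x * x j ∂stdGaussian d = ∫ x, F' x (EuclideanSpace.single j 1) ∂stdGaussian d := by
  obtain ⟨n, rfl⟩ := Nat.exists_eq_succ_of_ne_zero (Fin.pos j).ne'
  set γ := gaussianReal 0 1
  set π := Measure.pi fun _ : Fin n => γ
  let e : ℝ × (Fin n → ℝ) ≃ᵐ EuclideanSpace ℝ (Fin (n + 1)) :=
    (MeasurableEquiv.piFinSuccAbove (fun _ => ℝ) j).symm.trans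
      (MeasurableEquiv.toLp 2 (Fin (n + 1) → ℝ))
  have he : MeasurePreserving e (γ.prod π) (stdGaussian (n + 1)) :=
    (MeasurePreserving.mk (MeasurableEquiv.toLp 2 _).measurable rfl).comp
      (measurePreserving_piFinSuccAbove (fun _ => γ) j).symm
  have fubini {G : EuclideanSpace ℝ (Fin (n + 1)) → ℝ} (hG : Integrable G (stdGaussian (n + 1))) :
      (∫ x, G x ∂stdGaussian (n + 1)) = ∫ z, ∫ t, G (e (t, z)) ∂γ ∂π ∧
        ∀ᵐ z ∂π, Integrable (fun t => G (e (t, z))) γ := by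
    rw [← he.integrable_comp_emb e.measurableEmbedding] at hG
    exact ⟨(he.integral_comp' G).symm.trans (integral_prod_symm _ hG), hG.prod_left_ae⟩
  have he_apply (t : ℝ) (z : Fin n → ℝ) : e (t, z) j = t := by
    simp [e, MeasurableEquiv.piFinSuccAbove_symm_apply]
  have hline (t : ℝ) (z : Fin n → ℝ) :
      HasDerivAt (fun s => e (s, z)) (EuclideanSpace.single j 1) t := by
    have hfun : (fun s => e (s, z)) =
        (EuclideanSpace.equiv (Fin (n + 1)) ℝ).symm ∘ Function.update (j.insertNth 0 z) j := by
      funext s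
      simp only [e, MeasurableEquiv.trans_apply, MeasurableEquiv.piFinSuccAbove_symm_apply,
        MeasurableEquiv.toLp_apply, Function.comp_apply, Fin.update_insertNth]
      rfl
    rw [hfun]
    exact (EuclideanSpace.equiv (Fin (n + 1)) ℝ).symm.hasFDerivAt.comp_hasDerivAt t
      (hasDerivAt_update (j.insertNth 0 z) j t)
  obtain ⟨hl, hl_ae⟩ := fubini hFx
  obtain ⟨hr, hr_ae⟩ := fubini hF'i
  obtain ⟨-, h_ae⟩ := fubini hFi
  rw [hl, hr]
  refine integral_congr_ae ?_
  filter_upwards [hl_ae, hr_ae, h_ae] with z hzl hzr hz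
  simp only [he_apply] at hzl ⊢
  exact integral_mul_id_eq_integral_deriv_gaussianReal
    (fun t => (hF _).comp_hasDerivAt t (hline t z)) hz hzl hzr

theorem integral_eval_inner_mul_eval_inner_smul_stdGaussian (p q : ℝ[X])
    (a b : EuclideanSpace ℝ (Fin d)) :
    ∫ x, (p.eval ⟪a, x⟫ * q.eval ⟪b, x⟫) • x ∂stdGaussian d =
      (∫ x, (derivative p).eval ⟪a, x⟫ * q.eval ⟪b, x⟫ ∂stdGaussian d) • a +
      (∫ x, p.eval ⟪a, x⟫ * (derivative q).eval ⟪b, x⟫ ∂stdGaussian d) • b := by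
  have hF (x : EuclideanSpace ℝ (Fin d)) : HasFDerivAt (fun y => p.eval ⟪a, y⟫ * q.eval ⟪b, y⟫)
      (((derivative p).eval ⟪a, x⟫ * q.eval ⟪b, x⟫) • innerSL ℝ a +
        (p.eval ⟪a, x⟫ * (derivative q).eval ⟪b, x⟫) • innerSL ℝ b) x := by
    refine (((p.hasDerivAt _).comp_hasFDerivAt x (innerSL ℝ a).hasFDerivAt).mul
      ((q.hasDerivAt _).comp_hasFDerivAt x (innerSL ℝ b).hasFDerivAt)).congr_fderiv ?_
    simp only [Function.comp_apply, innerSL_apply_apply, smul_smul]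
    rw [add_comm, mul_comm (q.eval _)]
  ext j
  have hcomp := (EuclideanSpace.proj (𝕜 := ℝ) j).integral_comp_comm
    (integrable_stdGaussian (by fun_prop : Function.HasTemperateGrowth
      fun x : EuclideanSpace ℝ (Fin d) => (p.eval ⟪a, x⟫ * q.eval ⟪b, x⟫) • x))
  simp only [PiLp.proj_apply, PiLp.smul_apply, smul_eq_mul] at hcomp
  rw [← hcomp, integral_mul_apply_eq_integral_fderiv_stdGaussian j hF
    (integrable_stdGaussian (by fun_prop)) (integrable_stdGaussian (by fun_prop))]
  all_goals simp only [add_apply, smul_apply, innerSL_apply_apply,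
    EuclideanSpace.inner_single_right, smul_eq_mul, one_mul, conj_trivial]
  · rw [integral_add (integrable_stdGaussian (by fun_prop)) (integrable_stdGaussian (by fun_prop)),
      integral_mul_const, integral_mul_const]
    simp
  · exact integrable_stdGaussian (by fun_prop)

theorem integral_eval_Hp_succ_mul {a : EuclideanSpace ℝ (Fin d)} (ha : ‖a‖ = 1) (m : ℕ)
    (Q : ℝ[X]) (b : EuclideanSpace ℝ (Fin d)) :
    ∫ x, (Hp (m + 1)).eval ⟪a, x⟫ * Q.eval ⟪b, x⟫ ∂stdGaussian d =
      ⟪a, b⟫ * ∫ x, (Hp m).eval ⟪a, x⟫ * (derivative Q).eval ⟪b, x⟫ ∂stdGaussian d := by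
  have stein := congrArg (inner ℝ a)
    (integral_eval_inner_mul_eval_inner_smul_stdGaussian (Hp m) Q a b)
  rw [← integral_inner (integrable_stdGaussian (by fun_prop))] at stein
  simp only [inner_smul_right, inner_add_right, real_inner_self_eq_norm_sq, ha] at stein
  have hrec (x : EuclideanSpace ℝ (Fin d)) : (Hp (m + 1)).eval ⟪a, x⟫ * Q.eval ⟪b, x⟫ =
      (Hp m).eval ⟪a, x⟫ * Q.eval ⟪b, x⟫ * ⟪a, x⟫ -
        (derivative (Hp m)).eval ⟪a, x⟫ * Q.eval ⟪b, x⟫ := by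
    rw [Hp_succ, eval_sub, eval_mul, eval_X]
    ring
  simp_rw [hrec]
  rw [integral_sub (integrable_stdGaussian (by fun_prop)) (integrable_stdGaussian (by fun_prop)),
    stein]
  ring

theorem integral_eval_Hp_mul_eval_Hp {a b : EuclideanSpace ℝ (Fin d)} (ha : ‖a‖ = 1)
    (hb : ‖b‖ = 1) (m n : ℕ) :
    ∫ x, (Hp m).eval ⟪a, x⟫ * (Hp n).eval ⟪b, x⟫ ∂stdGaussian d =
      if m = n then (m ! : ℝ) * ⟪a, b⟫ ^ m else 0 := by
  induction m generalizing n with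
  | zero =>
    cases n with
    | zero => simp [Hp_zero]
    | succ k =>
      simp_rw [mul_comm ((Hp 0).eval _), integral_eval_Hp_succ_mul hb, derivative_Hp_zero]
      simp
  | succ m ih =>
    rw [integral_eval_Hp_succ_mul ha]
    cases n with
    | zero => simp [derivative_Hp_zero]
    | succ k =>
      simp_rw [derivative_Hp_succ, eval_mul, eval_C, mul_left_comm _ ((k : ℝ) + 1),
        integral_const_mul, ih]
      by_cases hmk : m = k
      · subst hmk
        simp only [if_true, Nat.factorial_succ]
        push_cast
        ring
      · simp [hmk]

theorem integral_eval_Hp_mul_eval_derivative_Hp_smul {a b : EuclideanSpace ℝ (Fin d)}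
    (ha : ‖a‖ = 1) (hb : ‖b‖ = 1) (m n : ℕ) :
    ∫ x, ((Hp m).eval ⟪a, x⟫ * (derivative (Hp n)).eval ⟪b, x⟫) • x ∂stdGaussian d =
      (if n = m then (m : ℝ) * m ! * ⟪a, b⟫ ^ (m - 1) else 0) • a +
      (if n = m + 2 then ((m + 2)! : ℝ) * ⟪a, b⟫ ^ m else 0) • b := by
  rw [integral_eval_inner_mul_eval_inner_smul_stdGaussian]
  congr 2
  · rcases m with _ | k
    · simp [derivative_Hp_zero]
    rcases n with _ | l
    · simp [derivative_Hp_zero]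
    simp_rw [derivative_Hp_succ, eval_mul, eval_C, mul_mul_mul_comm, integral_const_mul,
      integral_eval_Hp_mul_eval_Hp ha hb]
    by_cases hkl : k = l
    · subst hkl
      simp only [if_true, Nat.factorial_succ]
      push_cast
      ring
    · simp [hkl, Ne.symm hkl]
  · rcases n with _ | _ | l
    · simp [derivative_Hp_zero]
    · simp [derivative_Hp_succ, derivative_Hp_zero]
    simp_rw [derivative_Hp_succ, derivative_mul, derivative_C, zero_mul, zero_add,
      derivative_Hp_succ, eval_mul, eval_C, mul_left_comm (eval _ (Hp m)), integral_const_mul,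
      integral_eval_Hp_mul_eval_Hp ha hb]
    by_cases hml : m = l
    · subst hml
      simp only [if_true, Nat.factorial_succ]
      push_cast
      ring
    · simp [hml, Ne.symm hml]

end StdGaussian

lemma sum_mul_eval_derivative_sum_smul {V : Type*} [AddCommMonoid V] [Module ℝ V]
    (s t : Finset ℕ) (a b : ℕ → ℝ) (P Q : ℕ → ℝ[X]) (u v : ℝ) (x : V) :
    ((∑ m ∈ s, a m * (P m).eval u) * (derivative (∑ n ∈ t, C (b n) * Q n)).eval v) • x =
      ∑ m ∈ s, ∑ n ∈ t, (a m * b n) • (((P m).eval u * (derivative (Q n)).eval v) • x) := by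
  simp only [derivative_sum, derivative_C_mul, eval_finsetSum, eval_mul, eval_C,
    Finset.sum_mul_sum, Finset.sum_smul, smul_smul]
  refine Finset.sum_congr rfl fun m _ => Finset.sum_congr rfl fun n _ => ?_
  ring_nf

lemma div_sqrt_factorial_mul_div_sqrt_factorial_mul_factorial (x y : ℝ) (m : ℕ) :
    x / √(m ! : ℝ) * (y / √(m ! : ℝ)) * (m ! : ℝ) = x * y := by
  field_simp
  rw [Real.sq_sqrt (by positivity)]
  ring

lemma div_sqrt_factorial_mul_div_sqrt_factorial_add_two_mul_factorial (x y : ℝ) (m : ℕ) :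
    x / √(m ! : ℝ) * (y / √((m + 2)! : ℝ)) * ((m + 2)! : ℝ) =
      √(((m : ℝ) + 1) * ((m : ℝ) + 2)) * x * y := by
  have hfac : ((m + 2)! : ℝ) = m ! * (((m : ℝ) + 1) * ((m : ℝ) + 2)) := by
    push_cast [Nat.factorial_succ]
    ring
  rw [hfac, Real.sqrt_mul (by positivity)]
  field_simp
  rw [Real.sq_sqrt (by positivity), Real.sq_sqrt (by positivity)]
  ring

lemma Finset.sum_range_succ_ite_eq_of_forall_lt {M : Type*} [AddCommMonoid M] {q : ℕ}
    {f : ℕ → M} (hf : ∀ n, q < n → f n = 0) (k : ℕ) :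
    ∑ n ∈ Finset.range (q + 1), (if n = k then f n else 0) = f k := by
  rw [Finset.sum_ite_eq']
  split_ifs with hk
  · rfl
  · exact (hf k (by simpa using hk)).symm

/-- With `h(z) = Σ_{i=1}^M (α_i/√i!) He_i(z)`,
`ψ(z) = Σ_{i=0}^q (β_i/√i!) He_i(z)`, unit vectors `θ, w` with `ρ = θᵀw`, and
`x ∼ N(0, I_d)` (with the convention `β_j = 0` for `j > q`),
`E[h(θᵀx) ψ'(wᵀx) x] = Σ_{i≥1} [i α_i β_i ρ^(i-1) θ + √((i+1)(i+2)) α_i β_{i+2} ρ^i w]`. -/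
theorem hermite_population_gradient (d q M : ℕ) (α β : ℕ → ℝ)
    (hβ : ∀ j, q < j → β j = 0)
    (θ w : EuclideanSpace ℝ (Fin d)) (hθ : ‖θ‖ = 1) (hw : ‖w‖ = 1) :
    (∫ x, ((∑ i ∈ Finset.Icc 1 M,
            (α i / Real.sqrt (Nat.factorial i)) * (Hp i).eval ⟪θ, x⟫)
          * (Polynomial.derivative (∑ i ∈ Finset.range (q + 1),
              Polynomial.C (β i / Real.sqrt (Nat.factorial i)) * Hp i)).eval ⟪w, x⟫) • x
        ∂(stdGaussian d))
      = ∑ i ∈ Finset.Icc 1 M,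
          (((i : ℝ) * α i * β i * ⟪θ, w⟫ ^ (i - 1)) • θ
            + (Real.sqrt (((i : ℝ) + 1) * ((i : ℝ) + 2)) * α i * β (i + 2) * ⟪θ, w⟫ ^ i) • w) := by
  simp_rw [sum_mul_eval_derivative_sum_smul]
  rw [integral_finsetSum _ fun m _ => integrable_finsetSum _ fun n _ =>
    integrable_stdGaussian (by fun_prop)]
  refine Finset.sum_congr rfl fun m _ => ?_
  rw [integral_finsetSum _ fun n _ => integrable_stdGaussian (by fun_prop)]
  simp_rw [integral_smul, integral_eval_Hp_mul_eval_derivative_Hp_smul hθ hw, smul_add, smul_smul,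
    mul_ite, mul_zero, ite_smul, zero_smul, Finset.sum_add_distrib]
  rw [Finset.sum_range_succ_ite_eq_of_forall_lt (fun n hn => by simp [hβ n hn]),
    Finset.sum_range_succ_ite_eq_of_forall_lt (fun n hn => by simp [hβ n hn])]
  congr 2
  · linear_combination ((m : ℝ) * ⟪θ, w⟫ ^ (m - 1)) *
      div_sqrt_factorial_mul_div_sqrt_factorial_mul_factorial (α m) (β m) m
  · linear_combination ⟪θ, w⟫ ^ m *
      div_sqrt_factorial_mul_div_sqrt_factorial_add_two_mul_factorial (α m) (β (m + 2)) m
end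

section
/- Let w, θ ∈ ℝ^d be unit vectors, g ∈ ℝ^d, η > 0, and let P = I − wwᵀ be the orthogonal projection onto the hyperplane orthogonal to w. Define w' = (w + ηPg)/‖w + ηPg‖. If θᵀw ≥ 0 and θᵀw + η θᵀPg ≥ 0, then: (a) θᵀw' ≥ θᵀw + η θᵀPg − ½ (θᵀw) η² ‖g‖² − ½ η³ |θᵀPg| ‖g‖²; (b) θᵀw' ≤ θᵀw + η θᵀPg; and (c) |θᵀw' − θᵀw| ≤ η |θᵀPg| + ½ η² ‖g‖² (θᵀw) + ½ η³ |θᵀPg| ‖g‖². -/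
open scoped RealInnerProductSpace

set_option maxHeartbeats 1000000 in
/-- One-step alignment estimate for a renormalized projected gradient step.
With `Pg = g - (wᵀg)w` (the projection of `g` orthogonal to the unit vector `w`) and
`w' = (w + ηPg)/‖w + ηPg‖`, if `θᵀw ≥ 0` and `θᵀw + η θᵀPg ≥ 0` then the alignment
`θᵀw'` satisfies the stated lower, upper, and increment bounds. -/
theorem onestep_alignment_bounds (d : ℕ) (w θ g : EuclideanSpace ℝ (Fin d))
    (hw : ‖w‖ = 1) (hθ : ‖θ‖ = 1) (η : ℝ) (hη : 0 < η)
    (Pg : EuclideanSpace ℝ (Fin d)) (hPg : Pg = g - ⟪w, g⟫ • w)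
    (w' : EuclideanSpace ℝ (Fin d)) (hw' : w' = ‖w + η • Pg‖⁻¹ • (w + η • Pg))
    (h1 : 0 ≤ ⟪θ, w⟫) (h2 : 0 ≤ ⟪θ, w⟫ + η * ⟪θ, Pg⟫) :
    (⟪θ, w⟫ + η * ⟪θ, Pg⟫ - (1 / 2) * ⟪θ, w⟫ * η ^ 2 * ‖g‖ ^ 2
        - (1 / 2) * η ^ 3 * |⟪θ, Pg⟫| * ‖g‖ ^ 2 ≤ ⟪θ, w'⟫) ∧
    (⟪θ, w'⟫ ≤ ⟪θ, w⟫ + η * ⟪θ, Pg⟫) ∧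
    (|⟪θ, w'⟫ - ⟪θ, w⟫| ≤ η * |⟪θ, Pg⟫| + (1 / 2) * η ^ 2 * ‖g‖ ^ 2 * ⟪θ, w⟫
        + (1 / 2) * η ^ 3 * |⟪θ, Pg⟫| * ‖g‖ ^ 2) := by
  have hwPg : ⟪w, Pg⟫ = 0 := by
    have hww : ⟪w, w⟫ = 1 := by
      rw [real_inner_self_eq_norm_sq, hw]; norm_num
    rw [hPg, inner_sub_right, real_inner_smul_right, hww]; ring
  set a := ⟪θ, w⟫ with ha
  set b := ⟪θ, Pg⟫ with hb
  set N := ‖w + η • Pg‖ with hNdef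
  set p := ‖Pg‖ with hpdef
  set G := ‖g‖ with hGdef
  have hN2 : N ^ 2 = 1 + η ^ 2 * p ^ 2 := by
    rw [hNdef, norm_add_sq_real, hw, real_inner_smul_right, hwPg, norm_smul,
      Real.norm_eq_abs, abs_of_pos hη]
    ring
  have hpn : (0:ℝ) ≤ p := norm_nonneg _
  have hGn : (0:ℝ) ≤ G := norm_nonneg _
  have hNn : (0:ℝ) ≤ N := norm_nonneg _
  have hPgle : p ≤ G := by
    have hsq : p ^ 2 ≤ G ^ 2 := by
      rw [hpdef, hGdef, hPg, norm_sub_sq_real, real_inner_smul_right, norm_smul,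
        Real.norm_eq_abs, hw, real_inner_comm g w]
      nlinarith [sq_abs ⟪g, w⟫, sq_nonneg ⟪g, w⟫, sq_abs ⟪w, g⟫]
    nlinarith
  have ht : N * ⟪θ, w'⟫ = a + η * b := by
    have hNpos : (0:ℝ) < N := by nlinarith
    rw [hw', real_inner_smul_right, inner_add_right, real_inner_smul_right, ← ha, ← hb]
    field_simp
  set t := ⟪θ, w'⟫ with htdef
  clear_value a b N p G t
  clear hw' hPg hwPg ha hb hNdef hpdef hGdef htdef hw hθ
  clear w θ g Pg w'
  have hN1 : 1 ≤ N := by nlinarith [sq_nonneg (η * p)]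
  have hNpos : (0:ℝ) < N := lt_of_lt_of_le one_pos hN1
  have htnn : 0 ≤ t := by
    have htv : t = (a + η * b) / N := by
      rw [eq_div_iff hNpos.ne']; linarith [ht]
    rw [htv]; exact div_nonneg h2 hNpos.le
  have hstep : N - 1 ≤ η ^ 2 * G ^ 2 / 2 := by
    nlinarith [mul_le_mul hPgle hPgle hpn hGn, sq_nonneg η]
  have hupper : t ≤ a + η * b := by nlinarith
  have hlower : a + η * b - (1 / 2) * a * η ^ 2 * G ^ 2
      - (1 / 2) * η ^ 3 * |b| * G ^ 2 ≤ t := by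
    have hbabs : b ≤ |b| := le_abs_self b
    have h3 : t * (N - 1) ≤ (a + η * b) * (N - 1) :=
      mul_le_mul_of_nonneg_right hupper (by linarith)
    have h5 : a + η * b ≤ a + η * |b| := by nlinarith
    have h6 : 0 ≤ a + η * |b| := le_trans h2 h5
    have h4 : (a + η * b) * (N - 1) ≤ (a + η * |b|) * (η ^ 2 * G ^ 2 / 2) :=
      calc (a + η * b) * (N - 1) ≤ (a + η * |b|) * (N - 1) :=
            mul_le_mul_of_nonneg_right h5 (by linarith)
        _ ≤ (a + η * |b|) * (η ^ 2 * G ^ 2 / 2) :=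
            mul_le_mul_of_nonneg_left hstep h6
    nlinarith
  have hηb1 : η * -|b| ≤ η * b := mul_le_mul_of_nonneg_left (neg_abs_le b) hη.le
  have hηb2 : η * b ≤ η * |b| := mul_le_mul_of_nonneg_left (le_abs_self b) hη.le
  have hnn1 : 0 ≤ (1 / 2) * η ^ 2 * G ^ 2 * a := by positivity
  have hnn2 : 0 ≤ (1 / 2) * η ^ 3 * |b| * G ^ 2 := by positivity
  refine ⟨hlower, hupper, abs_le.mpr ⟨?_, ?_⟩⟩
  · linarith
  · linarith
end

section
/- Let a > 0, Q⁰ > 0, and define the sequence Q^t by the recursion Q^t = Q^{t−1} + a (Q^{t−1})² for t ≥ 1. If T is a natural number with a Q⁰ T < 1, then for every t = 0, 1, …, T one has Q^t ≤ Q⁰ / (1 − a Q⁰ t). Moreover, if a Q⁰ T ≤ 5/6, then Q^T ≤ (1 + 6 a Q⁰ T) Q⁰. -/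
/-!
Taking reciprocals linearises the recursion: for `x > 0`,
`1 / (x + a x²) = 1 / x - a / (1 + a x) ≥ 1 / x - a`, so `1 / Q^t ≥ 1 / Q⁰ - a t`, which inverts to
`Q^t ≤ Q⁰ / (1 - a Q⁰ t)` while the right side is positive. The second bound is
`1 / (1 - x) ≤ 1 + 6 x` for `0 ≤ x ≤ 5/6`, as `(1 + 6 x)(1 - x) = 1 + x (5 - 6 x)`.
-/

lemma inv_sub_le_inv_add_mul_sq {a x : ℝ} (ha : 0 ≤ a) (hx : 0 < x) :
    x⁻¹ - a ≤ (x + a * x ^ 2)⁻¹ := by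
  have hax : 0 < 1 + a * x := by positivity
  have hdecomp : (x + a * x ^ 2)⁻¹ = x⁻¹ - a / (1 + a * x) := by
    field_simp
    ring
  rw [hdecomp, sub_le_sub_iff_left]
  exact div_le_self ha (by nlinarith)

lemma div_one_sub_le_one_add_six_mul_mul {q x : ℝ} (hq : 0 ≤ q) (hx : 0 ≤ x) (hx' : x ≤ 5 / 6) :
    q / (1 - x) ≤ (1 + 6 * x) * q := by
  rw [div_le_iff₀ (by linarith)]
  nlinarith [mul_nonneg (mul_nonneg hx (by linarith : (0 : ℝ) ≤ 5 / 6 - x)) hq]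

namespace QuadraticRecurrence

variable {a : ℝ} {Q : ℕ → ℝ} (ha : 0 ≤ a) (hrec : ∀ t, Q (t + 1) = Q t + a * Q t ^ 2)
  (hQ : 0 < Q 0)
include ha hrec hQ

lemma pos (t : ℕ) : 0 < Q t := by
  induction t with
  | zero => exact hQ
  | succ n ih => rw [hrec]; positivity

lemma inv_sub_mul_le_inv (t : ℕ) : (Q 0)⁻¹ - a * t ≤ (Q t)⁻¹ := by
  induction t with
  | zero => simp
  | succ n ih =>
    rw [hrec, Nat.cast_succ]
    linarith [inv_sub_le_inv_add_mul_sq ha (pos ha hrec hQ n)]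

lemma le_div_one_sub {t : ℕ} (ht : a * Q 0 * t < 1) : Q t ≤ Q 0 / (1 - a * Q 0 * t) := by
  have hbarrier : 0 < (Q 0)⁻¹ - a * t := by
    rw [sub_pos, ← mul_lt_mul_iff_of_pos_left hQ, mul_inv_cancel₀ hQ.ne']
    linarith
  have hQ0 : Q 0 / (1 - a * Q 0 * t) = ((Q 0)⁻¹ - a * t)⁻¹ := by
    field_simp
  rw [hQ0]
  exact le_inv_of_le_inv₀ hbarrier (inv_sub_mul_le_inv ha hrec hQ t)

end QuadraticRecurrence

/-- Discrete Bihari–LaSalle inequality: if `Q⁰ > 0`, `a > 0` and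
`Q^t = Q^{t-1} + a (Q^{t-1})²`, then as long as `a Q⁰ T < 1` one has
`Q^t ≤ Q⁰/(1 - a Q⁰ t)` for all `t ≤ T`; moreover if `a Q⁰ T ≤ 5/6` then
`Q^T ≤ (1 + 6 a Q⁰ T) Q⁰`. -/
theorem discrete_bihari_lasalle (a Q0 : ℝ) (ha : 0 < a) (hQ0 : 0 < Q0)
    (Q : ℕ → ℝ) (h0 : Q 0 = Q0) (hrec : ∀ t, Q (t + 1) = Q t + a * Q t ^ 2) (T : ℕ) :
    (a * Q0 * T < 1 → ∀ t ≤ T, Q t ≤ Q0 / (1 - a * Q0 * t)) ∧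
    (a * Q0 * T ≤ 5 / 6 → Q T ≤ (1 + 6 * a * Q0 * T) * Q0) := by
  subst h0
  have hbound (t : ℕ) (ht : a * Q 0 * t < 1) := QuadraticRecurrence.le_div_one_sub ha.le hrec hQ0 ht
  refine ⟨fun hT t ht => hbound t (lt_of_le_of_lt (by gcongr) hT), fun hT => ?_⟩
  calc Q T ≤ Q 0 / (1 - a * Q 0 * T) := hbound T (by linarith)
    _ ≤ (1 + 6 * (a * Q 0 * T)) * Q 0 :=
      div_one_sub_le_one_add_six_mul_mul hQ0.le (by positivity) hT
    _ = (1 + 6 * a * Q 0 * T) * Q 0 := by ring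
end
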